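/- arXiv:2512.11640 — 4 statements merged into one kernel-verified Lean document; each statement's English description precedes it below -/
import Mathlib

section
/- Let 1 < p < ∞. Given ω ∈ B_{ℓ_p} with ω ≠ 0 and η > 0, there exists m = m(η, ω) ∈ ℕ such that for every ψ in the fiber ℳ_ω, every l ∈ ℕ, every integer k ≥ p, and every continuous k-homogeneous polynomial Q on ℓ_p with ‖Q‖ = 1 that does not depend on the first m coordinates (i.e. Q(x) = Q(x − x[m]) for all x), one has |ψ(Q)| ≤ (l^l k^k / (l+k)^{l+k})^{1/p} · (1+η)^l / ‖ω‖^l. -/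
open Metric Filter Set Topology ENNReal

noncomputable section

/-- Membership in the algebra `𝒜_u(B_X)` of holomorphic and uniformly continuous
functions on the open unit ball of `X`, each such function being identified with
its (unique) uniformly continuous extension to the closed unit ball. -/
def MemAu (X : Type*) [NormedAddCommGroup X] [NormedSpace ℂ X] (f : X → ℂ) : Prop :=
  DifferentiableOn ℂ f (ball (0 : X) 1) ∧ UniformContinuousOn f (closedBall (0 : X) 1)

/-- The spectrum `ℳ(𝒜_u(B_X))`: nonzero multiplicative linear functionals on
`𝒜_u(B_X)` (such functionals automatically have norm at most one, which is the
content of the field `bound'`). -/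
structure SpectrumAu (X : Type*) [NormedAddCommGroup X] [NormedSpace ℂ X] where
  toFun : ∀ f : X → ℂ, MemAu X f → ℂ
  ext' : ∀ f g hf hg, Set.EqOn f g (closedBall (0 : X) 1) → toFun f hf = toFun g hg
  map_add' : ∀ f g hf hg hfg, toFun (f + g) hfg = toFun f hf + toFun g hg
  map_smul' : ∀ (c : ℂ) (f : X → ℂ) (hf) (hcf), toFun (c • f) hcf = c * toFun f hf
  map_mul' : ∀ f g hf hg hfg, toFun (f * g) hfg = toFun f hf * toFun g hg
  nonzero' : ∃ f hf, toFun f hf ≠ 0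
  bound' : ∀ f hf C, (∀ x ∈ closedBall (0 : X) 1, ‖f x‖ ≤ C) → ‖toFun f hf‖ ≤ C

theorem memAu_one (X : Type*) [NormedAddCommGroup X] [NormedSpace ℂ X] :
    MemAu X (1 : X → ℂ) :=
  ⟨fun _ _ => differentiableWithinAt_const 1,
    uniformContinuous_const.mono_left inf_le_left⟩

/-- The evaluation homomorphism at a point of the closed unit ball. -/
def evalHomCB {X : Type*} [NormedAddCommGroup X] [NormedSpace ℂ X]
    (x : X) (hx : ‖x‖ ≤ 1) : SpectrumAu X where
  toFun f _ := f x
  ext' := fun _ _ _ _ h => h (mem_closedBall_zero_iff.2 hx)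
  map_add' := fun _ _ _ _ _ => rfl
  map_smul' := fun _ _ _ _ => rfl
  map_mul' := fun _ _ _ _ _ => rfl
  nonzero' := ⟨1, memAu_one X, one_ne_zero⟩
  bound' := fun _ _ _ hC => hC x (mem_closedBall_zero_iff.2 hx)

/-- The evaluation homomorphism `δ_x`; junk value for `x` outside the closed ball. -/
def evalHom {X : Type*} [NormedAddCommGroup X] [NormedSpace ℂ X] (x : X) : SpectrumAu X :=
  if hx : ‖x‖ ≤ 1 then evalHomCB x hx else evalHomCB 0 (by simp)

/-- The Gleason distance `‖φ - ψ‖` in the dual of `𝒜_u(B_X)`. -/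
def gleasonDist {X : Type*} [NormedAddCommGroup X] [NormedSpace ℂ X]
    (φ ψ : SpectrumAu X) : ℝ :=
  sSup {r : ℝ | ∃ (f : X → ℂ) (hf : MemAu X f),
    (∀ x ∈ closedBall (0 : X) 1, ‖f x‖ ≤ 1) ∧ r = ‖φ.toFun f hf - ψ.toFun f hf‖}

/-- The Gleason part `𝒢𝒫(φ)`. -/
def gleasonPart {X : Type*} [NormedAddCommGroup X] [NormedSpace ℂ X]
    (φ : SpectrumAu X) : Set (SpectrumAu X) :=
  {ψ | gleasonDist φ ψ < 2}

/-- The pseudo-hyperbolic distance `ρ(φ, ψ)`. -/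
def pseudoDist {X : Type*} [NormedAddCommGroup X] [NormedSpace ℂ X]
    (φ ψ : SpectrumAu X) : ℝ :=
  sSup {r : ℝ | ∃ (f : X → ℂ) (hf : MemAu X f),
    (∀ x ∈ closedBall (0 : X) 1, ‖f x‖ ≤ 1) ∧ ψ.toFun f hf = 0 ∧ r = ‖φ.toFun f hf‖}

/-- Membership in the fiber `ℳ_z` over a point `z` of `X`. -/
def memFiber {X : Type*} [NormedAddCommGroup X] [NormedSpace ℂ X]
    (φ : SpectrumAu X) (z : X) : Prop :=
  ∀ (x' : X →L[ℂ] ℂ) (h : MemAu X ⇑x'), φ.toFun ⇑x' h = x' z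

/-- The set of weak-star accumulation points of a family in the spectrum. -/
def wStarAccPts {X : Type*} [NormedAddCommGroup X] [NormedSpace ℂ X]
    {ι : Type*} (l : Filter ι) (Φ : ι → SpectrumAu X) : Set (SpectrumAu X) :=
  {ψ | ∀ (F : Finset (X → ℂ)) (hF : ∀ f ∈ F, MemAu X f) (ε : ℝ), 0 < ε →
    ∃ᶠ i in l, ∀ f, ∀ hf : f ∈ F,
      ‖(Φ i).toFun f (hF f hf) - ψ.toFun f (hF f hf)‖ < ε}

/-- Weak-star convergence of a net in the spectrum. -/
def WStarTendsto {X : Type*} [NormedAddCommGroup X] [NormedSpace ℂ X]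
    {ι : Type*} (l : Filter ι) (Φ : ι → SpectrumAu X) (ψ : SpectrumAu X) : Prop :=
  ∀ (f : X → ℂ) (hf : MemAu X f),
    Tendsto (fun i => (Φ i).toFun f hf) l (𝓝 (ψ.toFun f hf))

/-- Membership in the weak-star closure of the set of evaluations at points of the
open unit ball. -/
def inWStarClosureOfEvals {X : Type*} [NormedAddCommGroup X] [NormedSpace ℂ X]
    (ψ : SpectrumAu X) : Prop :=
  ∀ (F : Finset (X → ℂ)) (hF : ∀ f ∈ F, MemAu X f) (ε : ℝ), 0 < ε →
    ∃ x : X, ‖x‖ < 1 ∧ ∀ f, ∀ hf : f ∈ F,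
      ‖(evalHom x).toFun f (hF f hf) - ψ.toFun f (hF f hf)‖ < ε

/-- `φ` is a strong boundary point: for every (basic) weak-star neighborhood `U` of
`φ` there is `f ∈ 𝒜_u(B_X)` with `‖f‖ = 1 = φ(f)` and `|ψ(f)| < 1` for `ψ ∉ U`. -/
def IsStrongBoundaryPoint {X : Type*} [NormedAddCommGroup X] [NormedSpace ℂ X]
    (φ : SpectrumAu X) : Prop :=
  ∀ (F : Finset (X → ℂ)) (hF : ∀ f ∈ F, MemAu X f) (ε : ℝ), 0 < ε →
    ∃ (g : X → ℂ) (hg : MemAu X g),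
      (∀ x ∈ closedBall (0 : X) 1, ‖g x‖ ≤ 1) ∧ φ.toFun g hg = 1 ∧
      ∀ ψ : SpectrumAu X,
        (∃ f, ∃ hf : f ∈ F, ε ≤ ‖ψ.toFun f (hF f hf) - φ.toFun f (hF f hf)‖) →
        ‖ψ.toFun g hg‖ < 1

/-- The radius function `R(φ)`. -/
def radiusFn {X : Type*} [NormedAddCommGroup X] [NormedSpace ℂ X]
    (φ : SpectrumAu X) : ℝ :=
  sInf {r : ℝ | 0 < r ∧ r ≤ 1 ∧ ∀ (f : X → ℂ) (hf : MemAu X f) (C : ℝ),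
    (∀ x ∈ ball (0 : X) r, ‖f x‖ ≤ C) → ‖φ.toFun f hf‖ ≤ C}

/-- A continuous `k`-homogeneous polynomial: `P x = A(x, …, x)` for a continuous
symmetric `k`-linear form `A`. -/
def IsHomogPoly (X : Type*) [NormedAddCommGroup X] [NormedSpace ℂ X]
    (k : ℕ) (P : X → ℂ) : Prop :=
  ∃ A : ContinuousMultilinearMap ℂ (fun _ : Fin k => X) ℂ,
    (∀ (v : Fin k → X) (σ : Equiv.Perm (Fin k)), A (v ∘ σ) = A v) ∧
    ∀ x, P x = A fun _ => x

/-- The supremum norm of a polynomial over the closed unit ball. -/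
def polyNorm (X : Type*) [NormedAddCommGroup X] [NormedSpace ℂ X] (P : X → ℂ) : ℝ :=
  sSup {r : ℝ | ∃ x : X, ‖x‖ ≤ 1 ∧ r = ‖P x‖}

/-- The truncation `z[n] = (z 0, …, z (n-1), 0, 0, …)` of an element of `ℓ_p`. -/
def lpTrunc (p : ℝ≥0∞) (z : lp (fun _ : ℕ => ℂ) p) (n : ℕ) : lp (fun _ : ℕ => ℂ) p :=
  ∑ i ∈ Finset.range n, lp.single p i (z i)

/-- The canonical unit vector `e_n` of `ℓ_p`. -/
def lpUnit (p : ℝ≥0∞) (n : ℕ) : lp (fun _ : ℕ => ℂ) p := lp.single p n 1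

/-- The 4-homogeneous polynomial `Q x = Σ_{i<j} (x i * x j)^2` on `ℓ_1`. -/
def Qpoly (x : lp (fun _ : ℕ => ℂ) 1) : ℂ :=
  ∑' q : {q : ℕ × ℕ // q.1 < q.2}, (x q.1.1 * x q.1.2) ^ 2

/-- The characteristic sequence `1_M` of a set `M ⊆ ℕ`, as an element of `ℓ_∞`. -/
def indicatorSeq (M : Set ℕ) : lp (fun _ : ℕ => ℂ) ⊤ :=
  ⟨M.indicator fun _ => (1 : ℂ), memℓp_infty (by
    refine ⟨1, ?_⟩
    rintro r ⟨i, rfl⟩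
    by_cases h : i ∈ M <;> simp [h])⟩

/-- Membership in the fiber `ℳ_{z''}` over `z'' ∈ ℓ_1'' = (ℓ_∞)'`, where the dual of
`ℓ_1` is identified with `ℓ_∞` via the pairing `(y, x) ↦ Σ_i y i * x i`. -/
def memFiberL1 (φ : SpectrumAu (lp (fun _ : ℕ => ℂ) 1))
    (z'' : lp (fun _ : ℕ => ℂ) ⊤ →L[ℂ] ℂ) : Prop :=
  ∀ (y : lp (fun _ : ℕ => ℂ) ⊤)
    (h : MemAu (lp (fun _ : ℕ => ℂ) 1) fun x => ∑' i, y i * x i),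
    φ.toFun (fun x => ∑' i, y i * x i) h = z'' y

/-!
Choose `m` with `‖ω[m]‖ > ‖ω‖ / (1 + η)` and let `x'` be a norm-one functional norming
`ω[m]`, precomposed with the truncation `x ↦ x[m]`, so that `ψ(x') = x'(ω) = ‖ω[m]‖`.
For `‖x‖ ≤ 1` put `a = ‖x[m]‖` and `b = ‖x - x[m]‖`: then `a ^ p + b ^ p = ‖x‖ ^ p ≤ 1`,
`|x'(x)| ≤ a` and `|Q(x)| ≤ b ^ k`, so weighted AM-GM gives
`|x'(x) ^ l Q(x)| ≤ (l^l k^k / (l+k)^(l+k))^(1/p)`. As `ψ` is multiplicative and bounded by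
the sup norm, `‖ω[m]‖ ^ l |ψ(Q)|` obeys the same bound.
-/

section

variable {X : Type*} [NormedAddCommGroup X] [NormedSpace ℂ X]

theorem ContinuousLinearMap.memAu (T : X →L[ℂ] ℂ) : MemAu X T :=
  ⟨T.differentiable.differentiableOn, T.uniformContinuous.uniformContinuousOn⟩

/-- Uniform continuity of the product comes from that of multiplication on the compact set
where the pair `(f, g)` takes its values. -/
theorem MemAu.mul {f g : X → ℂ} (hf : MemAu X f) (hg : MemAu X g) {Cf Cg : ℝ}
    (hfC : ∀ x ∈ closedBall (0 : X) 1, ‖f x‖ ≤ Cf)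
    (hgC : ∀ x ∈ closedBall (0 : X) 1, ‖g x‖ ≤ Cg) :
    MemAu X (f * g) := by
  refine ⟨hf.1.mul hg.1, ?_⟩
  have hmul : UniformContinuousOn (fun z : ℂ × ℂ => z.1 * z.2)
      (closedBall 0 Cf ×ˢ closedBall 0 Cg) :=
    ((isCompact_closedBall 0 Cf).prod (isCompact_closedBall 0 Cg)).uniformContinuousOn_of_continuous
      continuous_mul.continuousOn
  rw [uniformContinuousOn_iff_restrict] at hmul ⊢
  have hfg : UniformContinuous fun x : closedBall (0 : X) 1 => (f x, g x) :=
    (uniformContinuousOn_iff_restrict.1 hf.2).prodMk (uniformContinuousOn_iff_restrict.1 hg.2)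
  exact hmul.comp (hfg.subtype_mk fun x =>
    ⟨mem_closedBall_zero_iff.2 (hfC x x.2), mem_closedBall_zero_iff.2 (hgC x x.2)⟩)

theorem MemAu.pow {f : X → ℂ} (hf : MemAu X f) {C : ℝ}
    (hC : ∀ x ∈ closedBall (0 : X) 1, ‖f x‖ ≤ C) : ∀ n : ℕ, MemAu X (f ^ n)
  | 0 => by simpa only [pow_zero] using memAu_one X
  | n + 1 => by
    rw [pow_succ]
    refine (hf.pow hC n).mul hf (Cf := C ^ n) (fun x hx => ?_) hC
    simpa only [Pi.pow_apply, norm_pow] using pow_le_pow_left₀ (norm_nonneg _) (hC x hx) n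

namespace SpectrumAu

variable (φ : SpectrumAu X)

theorem toFun_congr {f g : X → ℂ} (hfg : f = g) (hf : MemAu X f) (hg : MemAu X g) :
    φ.toFun f hf = φ.toFun g hg := by
  subst hfg; rfl

theorem toFun_one (h : MemAu X 1) : φ.toFun 1 h = 1 := by
  obtain ⟨f, hf, hf0⟩ := φ.nonzero'
  have hmul := φ.map_mul' 1 f h hf (by rwa [one_mul])
  rw [φ.toFun_congr (one_mul f) _ hf] at hmul
  exact (mul_eq_right₀ hf0).1 hmul.symm

theorem toFun_pow {f : X → ℂ} (hf : MemAu X f) (hpow : ∀ n : ℕ, MemAu X (f ^ n)) (n : ℕ) :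
    φ.toFun (f ^ n) (hpow n) = φ.toFun f hf ^ n := by
  induction n with
  | zero => rw [φ.toFun_congr (pow_zero f) _ (memAu_one X), φ.toFun_one, pow_zero]
  | succ n ih =>
    rw [φ.toFun_congr (pow_succ f n) _ (pow_succ f n ▸ hpow (n + 1)),
      φ.map_mul' _ _ (hpow n) hf, ih, pow_succ]

theorem norm_toFun_pow_mul_le {T : X →L[ℂ] ℂ} {f : X → ℂ} (hf : MemAu X f) {Cf : ℝ}
    (hfC : ∀ x ∈ closedBall (0 : X) 1, ‖f x‖ ≤ Cf) {l : ℕ} {C : ℝ}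
    (hC : ∀ x ∈ closedBall (0 : X) 1, ‖T x ^ l * f x‖ ≤ C) :
    ‖φ.toFun T T.memAu‖ ^ l * ‖φ.toFun f hf‖ ≤ C := by
  have hTC : ∀ x ∈ closedBall (0 : X) 1, ‖T x‖ ≤ ‖T‖ := fun x hx =>
    (T.le_opNorm x).trans (mul_le_of_le_one_right (norm_nonneg _) (mem_closedBall_zero_iff.1 hx))
  have hpow := T.memAu.pow hTC
  have hprod : MemAu X (⇑T ^ l * f) := (hpow l).mul hf (Cf := ‖T‖ ^ l)
    (fun x hx => by simpa using pow_le_pow_left₀ (norm_nonneg _) (hTC x hx) l) hfC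
  have hmul := φ.bound' _ hprod C hC
  rwa [φ.map_mul' _ _ (hpow l) hf, φ.toFun_pow T.memAu hpow, norm_mul, norm_pow] at hmul

end SpectrumAu

namespace IsHomogPoly

variable {k : ℕ} {Q : X → ℂ}

theorem map_smul (hQ : IsHomogPoly X k Q) (c : ℂ) (x : X) : Q (c • x) = c ^ k * Q x := by
  obtain ⟨A, -, hA⟩ := hQ
  simpa [hA] using A.map_smul_univ (fun _ => c) (fun _ => x)

theorem norm_le_polyNorm (hQ : IsHomogPoly X k Q) {x : X} (hx : ‖x‖ ≤ 1) :
    ‖Q x‖ ≤ polyNorm X Q := by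
  obtain ⟨A, -, hA⟩ := hQ
  refine le_csSup ⟨‖A‖, ?_⟩ ⟨x, hx, rfl⟩
  rintro r ⟨y, hy, rfl⟩
  rw [hA]
  refine (A.le_opNorm _).trans (mul_le_of_le_one_right (norm_nonneg A) ?_)
  exact Finset.prod_le_one (fun _ _ => norm_nonneg y) fun _ _ => hy

theorem norm_le_polyNorm_mul_norm_pow (hQ : IsHomogPoly X k Q) (x : X) :
    ‖Q x‖ ≤ polyNorm X Q * ‖x‖ ^ k := by
  set u : X := (‖x‖ : ℂ)⁻¹ • x
  have hxu : x = (‖x‖ : ℂ) • u := by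
    rcases eq_or_ne x 0 with rfl | hx
    · simp
    · exact (smul_inv_smul₀ (by simpa using hx) x).symm
  have hu : ‖u‖ ≤ 1 := by
    rw [norm_smul, norm_inv, Complex.norm_real, norm_norm]
    exact inv_mul_le_one_of_le₀ le_rfl (norm_nonneg x)
  calc ‖Q x‖ = ‖x‖ ^ k * ‖Q u‖ := by
        conv_lhs => rw [hxu]
        rw [hQ.map_smul, norm_mul, norm_pow, Complex.norm_real, norm_norm]
    _ ≤ polyNorm X Q * ‖x‖ ^ k := by
        rw [mul_comm]
        exact mul_le_mul_of_nonneg_right (hQ.norm_le_polyNorm hu) (by positivity)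

end IsHomogPoly

end

/-- Weighted AM-GM for the points `s (l + k) / l` and `t (l + k) / k` with weights
`l / (l + k)` and `k / (l + k)`. -/
theorem pow_mul_pow_le_of_add_le_one {s t : ℝ} (hs : 0 ≤ s) (ht : 0 ≤ t) (hst : s + t ≤ 1)
    (l k : ℕ) :
    s ^ l * t ^ k ≤ (l : ℝ) ^ l * (k : ℝ) ^ k / ((l : ℝ) + (k : ℝ)) ^ (l + k) := by
  rcases Nat.eq_zero_or_pos (l + k) with hlk | hlk
  · obtain ⟨rfl, rfl⟩ : l = 0 ∧ k = 0 := by omega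
    simp
  set n : ℝ := (l : ℝ) + (k : ℝ)
  have hn : 0 < n := by simp only [n, ← Nat.cast_add]; exact_mod_cast hlk
  have hw : (l : ℝ) / n + k / n = 1 := by rw [← add_div, div_self hn.ne']
  have hamgm := Real.geom_mean_le_arith_mean2_weighted (p₁ := s * n / l) (p₂ := t * n / k)
    (by positivity) (by positivity) (by positivity) (by positivity) hw
  have hweight : ∀ (a : ℝ) (j : ℕ), (j : ℝ) / n * (a * n / j) = a * (j / j) := fun a j => by
    field_simp
  have hmean : (l : ℝ) / n * (s * n / l) + k / n * (t * n / k) ≤ 1 := by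
    rw [hweight, hweight]
    nlinarith [div_self_le_one (l : ℝ), div_self_le_one (k : ℝ)]
  have hgeom := Real.rpow_le_rpow (by positivity) (hamgm.trans hmean) hn.le
  rw [Real.one_rpow, Real.mul_rpow (by positivity) (by positivity),
    ← Real.rpow_mul (by positivity), ← Real.rpow_mul (by positivity),
    div_mul_cancel₀ _ hn.ne', div_mul_cancel₀ _ hn.ne',
    Real.rpow_natCast, Real.rpow_natCast, div_pow, div_pow, mul_pow, mul_pow] at hgeom
  have hpos : (0 : ℝ) < (l : ℝ) ^ l * (k : ℝ) ^ k := by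
    exact_mod_cast Nat.mul_pos Nat.pow_self_pos Nat.pow_self_pos
  rw [le_div_iff₀ (by positivity), pow_add]
  rw [div_mul_div_comm, div_le_one (by positivity)] at hgeom
  linarith

section lp

variable {p : ℝ≥0∞}

theorem lpTrunc_apply (z : lp (fun _ : ℕ => ℂ) p) (n j : ℕ) :
    lpTrunc p z n j = if j < n then z j else 0 := by
  simp only [lpTrunc, lp.coeFn_sum, Finset.sum_apply, lp.single_apply, Pi.single_apply,
    Finset.sum_ite_eq, Finset.mem_range]

theorem norm_lpTrunc_rpow_add_norm_sub_lpTrunc_rpow (hp : 0 < p.toReal)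
    (x : lp (fun _ : ℕ => ℂ) p) (m : ℕ) :
    ‖lpTrunc p x m‖ ^ p.toReal + ‖x - lpTrunc p x m‖ ^ p.toReal = ‖x‖ ^ p.toReal := by
  refine ((lp.hasSum_norm hp _).add (lp.hasSum_norm hp _)).unique ?_
  convert lp.hasSum_norm hp x using 2 with i
  by_cases hi : i < m <;> simp [lpTrunc_apply, hi, Real.zero_rpow hp.ne']

variable [Fact (1 ≤ p)]

theorem tendsto_lpTrunc (hp : p ≠ ⊤) (x : lp (fun _ : ℕ => ℂ) p) :
    Tendsto (lpTrunc p x) atTop (𝓝 x) :=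
  (lp.hasSum_single hp x).tendsto_sum_nat

variable (p) in
def lpTruncCLM (m : ℕ) : lp (fun _ : ℕ => ℂ) p →L[ℂ] lp (fun _ : ℕ => ℂ) p :=
  ∑ i ∈ Finset.range m, (lp.singleContinuousLinearMap ℂ _ p i).comp (lp.evalCLM ℂ _ p i)

theorem lpTruncCLM_apply (m : ℕ) (x : lp (fun _ : ℕ => ℂ) p) :
    lpTruncCLM p m x = lpTrunc p x m := by
  simp [lpTruncCLM, lpTrunc, lp.evalCLM]

theorem exists_dual_vector_lpTrunc (ω : lp (fun _ : ℕ => ℂ) p) (m : ℕ) :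
    ∃ x' : lp (fun _ : ℕ => ℂ) p →L[ℂ] ℂ,
      x' ω = ‖lpTrunc p ω m‖ ∧ ∀ x, ‖x' x‖ ≤ ‖lpTrunc p x m‖ := by
  obtain ⟨g, hg, hgω⟩ := exists_dual_vector'' ℂ (lpTrunc p ω m)
  refine ⟨g.comp (lpTruncCLM p m), by simpa [lpTruncCLM_apply] using hgω, fun x => ?_⟩
  rw [ContinuousLinearMap.comp_apply, lpTruncCLM_apply]
  exact (g.le_opNorm _).trans (mul_le_of_le_one_left (norm_nonneg _) hg)

theorem norm_pow_mul_le_of_forall_eq_sub_lpTrunc (hp : 0 < p.toReal) {m l k : ℕ}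
    {Q : lp (fun _ : ℕ => ℂ) p → ℂ} (hQ : IsHomogPoly (lp (fun _ : ℕ => ℂ) p) k Q)
    (hQ1 : polyNorm (lp (fun _ : ℕ => ℂ) p) Q = 1) (hQtail : ∀ x, Q x = Q (x - lpTrunc p x m))
    {x' : lp (fun _ : ℕ => ℂ) p →L[ℂ] ℂ} (hx' : ∀ x, ‖x' x‖ ≤ ‖lpTrunc p x m‖)
    {x : lp (fun _ : ℕ => ℂ) p} (hx : ‖x‖ ≤ 1) :
    ‖x' x ^ l * Q x‖ ≤
      ((l : ℝ) ^ l * (k : ℝ) ^ k / ((l : ℝ) + (k : ℝ)) ^ (l + k)) ^ (1 / p.toReal) := by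
  set a := ‖lpTrunc p x m‖
  set b := ‖x - lpTrunc p x m‖
  have hab : a ^ p.toReal + b ^ p.toReal ≤ 1 := by
    rw [norm_lpTrunc_rpow_add_norm_sub_lpTrunc_rpow hp]
    exact Real.rpow_le_one (norm_nonneg x) hx hp.le
  calc ‖x' x ^ l * Q x‖ ≤ a ^ l * b ^ k := by
        rw [norm_mul, norm_pow, hQtail]
        refine mul_le_mul (pow_le_pow_left₀ (norm_nonneg _) (hx' x) l) ?_ (norm_nonneg _)
          (by positivity)
        simpa [hQ1] using hQ.norm_le_polyNorm_mul_norm_pow (x - lpTrunc p x m)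
    _ = ((a ^ p.toReal) ^ l * (b ^ p.toReal) ^ k) ^ (1 / p.toReal) := by
        rw [Real.rpow_pow_comm (norm_nonneg _), Real.rpow_pow_comm (norm_nonneg _),
          ← Real.mul_rpow (by positivity) (by positivity), one_div,
          Real.rpow_rpow_inv (by positivity) hp.ne']
    _ ≤ _ := Real.rpow_le_rpow (by positivity)
        (pow_mul_pow_le_of_add_le_one (by positivity) (by positivity) hab l k) (by positivity)

end lp

theorem exists_m_bound_on_tail_polynomials_general
    (p : ℝ≥0∞) [Fact (1 ≤ p)] (hptop : p ≠ ⊤)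
    (ω : lp (fun _ : ℕ => ℂ) p) (hω0 : ω ≠ 0)
    (η : ℝ) (hη : 0 < η) :
    ∃ m : ℕ, ∀ ψ : SpectrumAu (lp (fun _ : ℕ => ℂ) p), memFiber ψ ω →
      ∀ l k : ℕ, p.toReal ≤ (k : ℝ) →
        ∀ Q : lp (fun _ : ℕ => ℂ) p → ℂ,
          IsHomogPoly (lp (fun _ : ℕ => ℂ) p) k Q →
          polyNorm (lp (fun _ : ℕ => ℂ) p) Q = 1 →
          (∀ x, Q x = Q (x - lpTrunc p x m)) →
          ∀ hQ : MemAu (lp (fun _ : ℕ => ℂ) p) Q,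
            ‖ψ.toFun Q hQ‖ ≤
              ((l : ℝ) ^ l * (k : ℝ) ^ k / ((l : ℝ) + (k : ℝ)) ^ (l + k)) ^ (1 / p.toReal) *
                ((1 + η) ^ l / ‖ω‖ ^ l) := by
  have hp : 0 < p.toReal := ENNReal.toReal_pos (zero_lt_one.trans_le Fact.out).ne' hptop
  have hωη : 0 < ‖ω‖ / (1 + η) := by positivity
  obtain ⟨m, hm⟩ := (((continuous_norm.tendsto ω).comp (tendsto_lpTrunc hptop ω)).eventually
    (eventually_gt_nhds (div_lt_self (norm_pos_iff.2 hω0) (lt_add_of_pos_right 1 hη)))).exists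
  refine ⟨m, fun ψ hψ l k _ Q hQ hQ1 hQtail hQmem => ?_⟩
  obtain ⟨x', hx'ω, hx'⟩ := exists_dual_vector_lpTrunc ω m
  have hbound := ψ.norm_toFun_pow_mul_le hQmem (l := l)
    (fun x hx => hQ1 ▸ hQ.norm_le_polyNorm (mem_closedBall_zero_iff.1 hx)) fun x hx =>
      norm_pow_mul_le_of_forall_eq_sub_lpTrunc hp hQ hQ1 hQtail hx' (mem_closedBall_zero_iff.1 hx)
  rw [hψ x', hx'ω, Complex.norm_real, norm_norm, mul_comm] at hbound
  set D := ((l : ℝ) ^ l * (k : ℝ) ^ k / ((l : ℝ) + (k : ℝ)) ^ (l + k)) ^ (1 / p.toReal)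
  calc ‖ψ.toFun Q hQmem‖ ≤ D / ‖lpTrunc p ω m‖ ^ l :=
        (le_div_iff₀ (pow_pos (hωη.trans hm) l)).2 hbound
    _ ≤ D / (‖ω‖ / (1 + η)) ^ l :=
        div_le_div_of_nonneg_left (by positivity) (by positivity)
          (pow_le_pow_left₀ hωη.le hm.le l)
    _ = _ := by rw [div_pow, div_div_eq_mul_div, mul_div_assoc]

/-- For `1 < p < ∞`, `ω ∈ B_{ℓ_p} \ {0}` and `η > 0`, there is `m ∈ ℕ`
such that for every `ψ` in the fiber `ℳ_ω`, every `l ∈ ℕ`, every integer `k ≥ p` and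
every norm-one continuous `k`-homogeneous polynomial `Q` not depending on the first
`m` coordinates, `|ψ(Q)| ≤ (l^l k^k / (l+k)^{l+k})^{1/p} (1+η)^l / ‖ω‖^l`. -/
theorem exists_m_bound_on_tail_polynomials
    (p : ℝ≥0∞) [Fact (1 ≤ p)] (hp : 1 < p) (hptop : p ≠ ⊤)
    (ω : lp (fun _ : ℕ => ℂ) p) (hω : ‖ω‖ < 1) (hω0 : ω ≠ 0)
    (η : ℝ) (hη : 0 < η) :
    ∃ m : ℕ, ∀ ψ : SpectrumAu (lp (fun _ : ℕ => ℂ) p), memFiber ψ ω →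
      ∀ l k : ℕ, p.toReal ≤ (k : ℝ) →
        ∀ Q : lp (fun _ : ℕ => ℂ) p → ℂ,
          IsHomogPoly (lp (fun _ : ℕ => ℂ) p) k Q →
          polyNorm (lp (fun _ : ℕ => ℂ) p) Q = 1 →
          (∀ x, Q x = Q (x - lpTrunc p x m)) →
          ∀ hQ : MemAu (lp (fun _ : ℕ => ℂ) p) Q,
            ‖ψ.toFun Q hQ‖ ≤
              ((l : ℝ) ^ l * (k : ℝ) ^ k / ((l : ℝ) + (k : ℝ)) ^ (l + k)) ^ (1 / p.toReal) *
                ((1 + η) ^ l / ‖ω‖ ^ l) :=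
  exists_m_bound_on_tail_polynomials_general p hptop ω hω0 η hη

end
end

section
/- Let X be a complex Banach space and φ ∈ ℳ(𝒜_u(B_X)). If the radius function satisfies R(φ) < 1, then φ belongs to the Gleason part of δ_0, i.e. φ ∈ 𝒢𝒫(δ_0). -/
open Metric Filter Set Topology ENNReal

noncomputable section

/-! By Schwarz's lemma a function `f` of sup norm at most one satisfies `‖f x - f 0‖ ≤ 2 ‖x‖`.
If `R(φ) < 1`, then `φ` is dominated by the sup norm over a ball of radius `r < 1`, so
`|φ(f) - f(0)| = |φ(f - f(0))| ≤ 2r` and hence `‖φ - δ_0‖ ≤ 2r < 2`. -/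

theorem norm_sub_apply_zero_le_two_mul_norm {X F : Type*} [NormedAddCommGroup X]
    [NormedSpace ℂ X] [NormedAddCommGroup F] [NormedSpace ℂ F] {f : X → F}
    (hd : DifferentiableOn ℂ f (ball 0 1)) (hb : ∀ y ∈ ball (0 : X) 1, ‖f y‖ ≤ 1)
    {x : X} (hx : x ∈ ball (0 : X) 1) : ‖f x - f 0‖ ≤ 2 * ‖x‖ := by
  have hmaps : MapsTo f (ball 0 1) (closedBall (f 0) 2) := fun y hy => by
    rw [mem_closedBall, dist_eq_norm]
    calc ‖f y - f 0‖ ≤ ‖f y‖ + ‖f 0‖ := norm_sub_le _ _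
      _ ≤ 1 + 1 := add_le_add (hb y hy) (hb 0 (mem_ball_self one_pos))
      _ = 2 := by norm_num
  simpa [dist_eq_norm] using Complex.dist_le_div_mul_dist_of_mapsTo_ball hd hmaps hx

theorem norm_le_on_closedBall_of_norm_le_on_ball {X F : Type*} [NormedAddCommGroup X]
    [NormedSpace ℝ X] [NormedAddCommGroup F] {f : X → F} {c : X} {r C : ℝ} (hr : r ≠ 0)
    (hf : ContinuousOn f (closedBall c r)) (hC : ∀ y ∈ ball c r, ‖f y‖ ≤ C) :
    ∀ y ∈ closedBall c r, ‖f y‖ ≤ C := by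
  rw [← closure_ball c hr] at hf ⊢
  intro y hy
  have hsub : f '' ball c r ⊆ closedBall 0 C := by
    rintro _ ⟨z, hz, rfl⟩
    exact mem_closedBall_zero_iff.2 (hC z hz)
  have hy' : f y ∈ closure (f '' ball c r) := hf.image_closure ⟨y, hy, rfl⟩
  exact mem_closedBall_zero_iff.1 (isClosed_closedBall.closure_subset_iff.2 hsub hy')

theorem MemAu.sub_const {X : Type*} [NormedAddCommGroup X] [NormedSpace ℂ X] {f : X → ℂ}
    (hf : MemAu X f) (c : ℂ) : MemAu X (fun x => f x - c) :=
  ⟨hf.1.sub_const c,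
    (uniformContinuous_id.sub uniformContinuous_const).comp_uniformContinuousOn hf.2⟩

theorem evalHom_toFun {X : Type*} [NormedAddCommGroup X] [NormedSpace ℂ X] {x : X}
    (hx : ‖x‖ ≤ 1) {f : X → ℂ} (hf : MemAu X f) : (evalHom x).toFun f hf = f x := by
  rw [evalHom, dif_pos hx]
  rfl

theorem gleasonDist_le {X : Type*} [NormedAddCommGroup X] [NormedSpace ℂ X]
    {φ ψ : SpectrumAu X} {c : ℝ} (hc : 0 ≤ c)
    (h : ∀ f (hf : MemAu X f), (∀ x ∈ closedBall (0 : X) 1, ‖f x‖ ≤ 1) →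
      ‖φ.toFun f hf - ψ.toFun f hf‖ ≤ c) :
    gleasonDist φ ψ ≤ c :=
  Real.sSup_le (by rintro _ ⟨f, hf, hb, rfl⟩; exact h f hf hb) hc

namespace SpectrumAu

variable {X : Type*} [NormedAddCommGroup X] [NormedSpace ℂ X]

/-- The condition on `r` in the definition of `radiusFn`. -/
def IsDominatedOnBall (φ : SpectrumAu X) (r : ℝ) : Prop :=
  ∀ (f : X → ℂ) (hf : MemAu X f) (C : ℝ),
    (∀ x ∈ ball (0 : X) r, ‖f x‖ ≤ C) → ‖φ.toFun f hf‖ ≤ C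

theorem toFun_one_s11 (φ : SpectrumAu X) : φ.toFun 1 (memAu_one X) = 1 := by
  obtain ⟨g, hg, hne⟩ := φ.nonzero'
  have hmul : φ.toFun (g * 1) (by rwa [mul_one]) = φ.toFun g hg * φ.toFun 1 (memAu_one X) :=
    φ.map_mul' _ _ _ _ _
  rw [φ.ext' (g * 1) g _ hg fun x _ => mul_one (g x)] at hmul
  exact (mul_left_cancel₀ hne (by rw [mul_one]; exact hmul)).symm

theorem toFun_sub_const (φ : SpectrumAu X) {f : X → ℂ} (hf : MemAu X f) (c : ℂ) :
    φ.toFun (fun x => f x - c) (hf.sub_const c) = φ.toFun f hf - c := by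
  have hc : MemAu X ((-c) • (1 : X → ℂ)) := by
    convert (memAu_one X).sub_const (1 + c) using 1
    funext x
    simp
  have hfc : MemAu X (f + (-c) • (1 : X → ℂ)) := by
    convert hf.sub_const c using 1
    funext x
    simp [sub_eq_add_neg]
  rw [φ.ext' _ _ _ hfc fun x _ => by simp [sub_eq_add_neg], φ.map_add' _ _ hf hc,
    φ.map_smul' _ _ (memAu_one X), toFun_one_s11]
  ring

theorem isDominatedOnBall_one (φ : SpectrumAu X) : φ.IsDominatedOnBall 1 := fun f hf _ hC =>
  φ.bound' f hf _ (norm_le_on_closedBall_of_norm_le_on_ball one_ne_zero hf.2.continuousOn hC)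

theorem exists_isDominatedOnBall_of_radiusFn_lt {φ : SpectrumAu X} {s : ℝ}
    (h : radiusFn φ < s) : ∃ r, 0 < r ∧ r < s ∧ φ.IsDominatedOnBall r := by
  obtain ⟨r, ⟨hr0, -, hr⟩, hrs⟩ :=
    exists_lt_of_csInf_lt (by exact ⟨1, one_pos, le_rfl, φ.isDominatedOnBall_one⟩) h
  exact ⟨r, hr0, hrs, hr⟩

theorem norm_toFun_sub_apply_zero_le {φ : SpectrumAu X} {r : ℝ} (hr1 : r ≤ 1)
    (hr : φ.IsDominatedOnBall r) {f : X → ℂ} (hf : MemAu X f)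
    (hb : ∀ x ∈ closedBall (0 : X) 1, ‖f x‖ ≤ 1) : ‖φ.toFun f hf - f 0‖ ≤ 2 * r := by
  rw [← φ.toFun_sub_const hf]
  refine hr _ _ _ fun x hx => ?_
  have hxr : ‖x‖ < r := mem_ball_zero_iff.1 hx
  calc ‖f x - f 0‖ ≤ 2 * ‖x‖ :=
        norm_sub_apply_zero_le_two_mul_norm hf.1 (fun y hy => hb y (ball_subset_closedBall hy))
          (mem_ball_zero_iff.2 (hxr.trans_le hr1))
    _ ≤ 2 * r := by linarith

end SpectrumAu

/-- If `φ ∈ ℳ(𝒜_u(B_X))` has radius function `R(φ) < 1`, then `φ`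
belongs to the Gleason part of `δ_0`. -/
theorem mem_gleason_part_of_zero_of_radius_lt_one
    {X : Type*} [NormedAddCommGroup X] [NormedSpace ℂ X]
    (φ : SpectrumAu X) (h : radiusFn φ < 1) :
    φ ∈ gleasonPart (evalHom (0 : X)) := by
  obtain ⟨r, hr0, hr1, hr⟩ := SpectrumAu.exists_isDominatedOnBall_of_radiusFn_lt h
  calc gleasonDist (evalHom 0) φ ≤ 2 * r := gleasonDist_le (by positivity) fun f hf hb => by
        rw [evalHom_toFun (by simp), norm_sub_rev]
        exact SpectrumAu.norm_toFun_sub_apply_zero_le hr1.le hr hf hb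
    _ < 2 := by linarith

end
end

section
/- The 4-homogeneous polynomial Q on the complex space ℓ_1 given by Q(x) = Σ_{i<j} (x(i) x(j))² has norm ‖Q‖ = sup{|Q(x)| : ‖x‖₁ ≤ 1} = 1/16; moreover the supremum is attained at x₀ = (1/2, 1/2, 0, 0, …). -/
open Metric Filter Set Topology ENNReal

noncomputable section

/-- The point `x₀ = (1/2, 1/2, 0, 0, …)` of `ℓ_1`. -/
def xZero : lp (fun _ : ℕ => ℂ) 1 :=
  lp.single 1 0 ((1 : ℂ) / 2) + lp.single 1 1 ((1 : ℂ) / 2)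

/-!
For `sᵢ = ‖x i‖` put `A = ∑ sᵢ²` and `B = ∑_{i<j} sᵢ sⱼ`, so that `A + 2B = ‖x‖²`. Every product
`sᵢ sⱼ` with `i ≠ j` is at most `(sᵢ² + sⱼ²) / 2 ≤ A / 2`, hence
`|Q x| ≤ ∑_{i<j} (sᵢ sⱼ)² ≤ (A / 2) B ≤ (A + 2B)² / 16 = ‖x‖⁴ / 16` by AM-GM.
The inequality is proved for the finite partial sums, which bound the infinite one.
Equality holds at `x₀`, where `A = 2B = 1/2`.
-/

open Finset

section UpperPairs

variable {R : Type*}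

theorem sq_sum_range_eq [CommSemiring R] (s : ℕ → R) (N : ℕ) :
    (∑ i ∈ range N, s i) ^ 2 =
      ∑ i ∈ range N, s i ^ 2 + 2 * ∑ j ∈ range N, ∑ i ∈ range j, s i * s j := by
  induction N with
  | zero => simp
  | succ N ih =>
    rw [sum_range_succ, sum_range_succ, sum_range_succ, add_sq, ih, ← sum_mul]
    ring

theorem sum_range_sum_range_sq_mul_sq_le
    [Field R] [LinearOrder R] [IsStrictOrderedRing R] {s : ℕ → R} (hs : ∀ i, 0 ≤ s i)
    (N : ℕ) :
    ∑ j ∈ range N, ∑ i ∈ range j, (s i * s j) ^ 2 ≤ (∑ i ∈ range N, s i) ^ 4 / 16 := by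
  set A := ∑ i ∈ range N, s i ^ 2
  set B := ∑ j ∈ range N, ∑ i ∈ range j, s i * s j
  have hpair : ∀ j ∈ range N, ∀ i ∈ range j, s i * s j ≤ A / 2 := by
    intro j hj i hi
    rw [Finset.mem_range] at hi hj
    have hsq : s i ^ 2 + s j ^ 2 ≤ A := by
      rw [← sum_pair (f := fun k => s k ^ 2) hi.ne]
      refine sum_le_sum_of_subset_of_nonneg ?_ fun k _ _ => sq_nonneg (s k)
      simp only [Finset.insert_subset_iff, Finset.singleton_subset_iff, Finset.mem_range]
      exact ⟨hi.trans hj, hj⟩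
    nlinarith [sq_nonneg (s i - s j)]
  have hsq : (∑ i ∈ range N, s i) ^ 2 = A + 2 * B := sq_sum_range_eq s N
  have hB : 0 ≤ B := sum_nonneg fun j _ => sum_nonneg fun i _ => mul_nonneg (hs i) (hs j)
  calc ∑ j ∈ range N, ∑ i ∈ range j, (s i * s j) ^ 2
      ≤ ∑ j ∈ range N, ∑ i ∈ range j, A / 2 * (s i * s j) := by
        gcongr with j hj i hi
        rw [sq]
        exact mul_le_mul_of_nonneg_right (hpair j hj i hi) (mul_nonneg (hs i) (hs j))
    _ = A / 2 * B := by simp only [B, mul_sum]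
    _ ≤ (A + 2 * B) ^ 2 / 16 := by nlinarith [sq_nonneg (A - 2 * B)]
    _ = (∑ i ∈ range N, s i) ^ 4 / 16 := by rw [← hsq]; ring

end UpperPairs

theorem sum_sq_mul_sq_le_tsum_pow_four {s : ℕ → ℝ} (hs0 : ∀ i, 0 ≤ s i) (hs : Summable s)
    (T : Finset {q : ℕ × ℕ // q.1 < q.2}) :
    ∑ q ∈ T, (s q.1.1 * s q.1.2) ^ 2 ≤ (∑' i, s i) ^ 4 / 16 := by
  obtain ⟨N, hN⟩ : ∃ N, ∀ q ∈ T, q.1.2 < N :=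
    ⟨T.sup (fun q => q.1.2) + 1, fun q hq =>
      Nat.lt_succ_of_le (le_sup (f := fun q => q.1.2) hq)⟩
  calc ∑ q ∈ T, (s q.1.1 * s q.1.2) ^ 2
      = ∑ p ∈ T.map (Function.Embedding.subtype _), (s p.1 * s p.2) ^ 2 := by
        rw [sum_map]
        rfl
    _ ≤ ∑ p ∈ (range N ×ˢ range N).filter (fun p => p.1 < p.2),
          (s p.1 * s p.2) ^ 2 := by
        refine sum_le_sum_of_subset_of_nonneg ?_ fun p _ _ => sq_nonneg _
        rintro _ hp
        obtain ⟨q, hq, rfl⟩ := mem_map.1 hp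
        have := hN q hq
        simp only [mem_filter, mem_product, Finset.mem_range, Function.Embedding.subtype_apply]
        exact ⟨⟨q.2.trans this, this⟩, q.2⟩
    _ = ∑ j ∈ range N, ∑ i ∈ range j, (s i * s j) ^ 2 :=
        sum_finset_product_right _ _ _ fun p => by
          simp only [mem_filter, mem_product, Finset.mem_range]
          omega
    _ ≤ (∑ i ∈ range N, s i) ^ 4 / 16 := sum_range_sum_range_sq_mul_sq_le hs0 N
    _ ≤ (∑' i, s i) ^ 4 / 16 := by
        gcongr
        · exact sum_nonneg fun i _ => hs0 i
        · exact hs.sum_le_tsum _ fun i _ => hs0 i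

theorem norm_Qpoly_le (x : lp (fun _ : ℕ => ℂ) 1) : ‖Qpoly x‖ ≤ ‖x‖ ^ 4 / 16 := by
  have hs : Summable fun i => ‖x i‖ := by
    simpa using (lp.memℓp x).summable (by norm_num : 0 < (1 : ℝ≥0∞).toReal)
  have hnorm : ‖x‖ = ∑' i, ‖x i‖ := by
    simpa using lp.norm_eq_tsum_rpow (by norm_num : 0 < (1 : ℝ≥0∞).toReal) x
  have hpartial : ∀ T : Finset {q : ℕ × ℕ // q.1 < q.2},
      ∑ q ∈ T, ‖(x q.1.1 * x q.1.2) ^ 2‖ ≤ ‖x‖ ^ 4 / 16 := by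
    simpa only [norm_pow, norm_mul, hnorm] using
      sum_sq_mul_sq_le_tsum_pow_four (fun i => norm_nonneg _) hs
  calc ‖Qpoly x‖ ≤ ∑' q : {q : ℕ × ℕ // q.1 < q.2}, ‖(x q.1.1 * x q.1.2) ^ 2‖ :=
        norm_tsum_le_tsum_norm (summable_of_sum_le (fun _ => norm_nonneg _) hpartial)
    _ ≤ ‖x‖ ^ 4 / 16 := Real.tsum_le_of_sum_le (fun _ => norm_nonneg _) hpartial

theorem norm_xZero_le : ‖xZero‖ ≤ 1 :=
  (norm_add_le _ _).trans <| by
    rw [lp.norm_single (by norm_num), lp.norm_single (by norm_num)]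
    norm_num

theorem xZero_apply_eq_zero {i : ℕ} (hi : 2 ≤ i) : xZero i = 0 := by
  simp [xZero, lp.single_apply, show i ≠ 0 by omega, show i ≠ 1 by omega]

theorem Qpoly_xZero : Qpoly xZero = 1 / 16 := by
  rw [Qpoly, tsum_eq_single ⟨(0, 1), Nat.one_pos⟩]
  · norm_num [xZero, lp.single_apply]
  · rintro ⟨⟨i, j⟩, hij⟩ hne
    have hj : 2 ≤ j := by
      by_contra! hj
      obtain rfl : i = 0 := by omega
      obtain rfl : j = 1 := by omega
      exact hne rfl
    simp [xZero_apply_eq_zero hj]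

/-- The 4-homogeneous polynomial `Q x = Σ_{i<j} (x i * x j)^2` on
`ℓ_1` has norm `1/16`, and the supremum is attained at `x₀ = (1/2, 1/2, 0, 0, …)`. -/
theorem Qpoly_norm_eq_one_sixteenth :
    (∀ x : lp (fun _ : ℕ => ℂ) 1, ‖x‖ ≤ 1 → ‖Qpoly x‖ ≤ 1 / 16) ∧
    ‖xZero‖ ≤ 1 ∧
    Qpoly xZero = 1 / 16 ∧
    polyNorm (lp (fun _ : ℕ => ℂ) 1) Qpoly = 1 / 16 := by
  have hbound : ∀ x : lp (fun _ : ℕ => ℂ) 1, ‖x‖ ≤ 1 → ‖Qpoly x‖ ≤ 1 / 16 := fun x hx =>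
    (norm_Qpoly_le x).trans <| by
      have := pow_le_one₀ (norm_nonneg x) hx (n := 4)
      linarith
  refine ⟨hbound, norm_xZero_le, Qpoly_xZero, ?_⟩
  refine IsGreatest.csSup_eq ⟨⟨xZero, norm_xZero_le, by rw [Qpoly_xZero]; norm_num⟩, ?_⟩
  rintro r ⟨x, hx, rfl⟩
  exact hbound x hx

end
end

section
/- Let ω ∈ c₀^⊥ ⊆ (ℓ_∞)' be positive, i.e. ω(x) is real and nonnegative for every x ∈ ℓ_∞ with x(i) ≥ 0 for all i. Then there exists an infinite subset M ⊆ ℕ such that ω(1_M) = 0, where 1_M ∈ ℓ_∞ is the characteristic sequence of M (equal to 1 on M and 0 elsewhere). -/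
open Metric Filter Set Topology ENNReal

noncomputable section

/-!
Discretised lines of distinct slopes through the origin form an uncountable family of infinite
subsets of `ℕ` with pairwise finite intersections. The set function `A ↦ Re ω(1_A)` is nonnegative,
finitely additive and vanishes on finite sets, so on such a family it adds up exactly over finite
subfamilies, all bounded by `Re ω(1)`; hence it vanishes on all but countably many members. For
such a member `M`, positivity also forces `Im ω(1_M) = 0`.
-/

section AlmostDisjoint

def floorGraph (r : ℝ) : Set (ℕ × ℤ) := range fun n : ℕ => (n, ⌊r * n⌋)

lemma floorGraph_infinite (r : ℝ) : (floorGraph r).Infinite :=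
  infinite_range_of_injective fun _ _ h => (Prod.ext_iff.1 h).1

lemma floorGraph_inter_finite {r s : ℝ} (hrs : r ≠ s) :
    (floorGraph r ∩ floorGraph s).Finite := by
  have hpos : 0 < |r - s| := abs_pos.2 (sub_ne_zero.2 hrs)
  refine ((finite_Iic ⌊|r - s|⁻¹⌋₊).image fun n : ℕ => (n, ⌊r * n⌋)).subset ?_
  rintro _ ⟨⟨n, rfl⟩, ⟨m, hm⟩⟩
  obtain ⟨rfl, hfloor⟩ := Prod.ext_iff.1 hm
  refine ⟨m, Nat.le_floor ?_, rfl⟩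
  have hclose : |r - s| * m < 1 := by
    have := Int.abs_sub_lt_one_of_floor_eq_floor hfloor.symm
    rwa [← sub_mul, abs_mul, Nat.abs_cast] at this
  rw [← one_div, le_div_iff₀ hpos, mul_comm]
  exact hclose.le

theorem exists_uncountable_almostDisjoint_family :
    ∃ A : ℝ → Set ℕ, (∀ r, (A r).Infinite) ∧ Pairwise fun r s => (A r ∩ A s).Finite := by
  have hinj : Function.Injective (Encodable.encode : ℕ × ℤ → ℕ) := Encodable.encode_injective
  refine ⟨fun r => Encodable.encode '' floorGraph r,
    fun r => (floorGraph_infinite r).image hinj.injOn, fun r s hrs => ?_⟩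
  show (Encodable.encode '' _ ∩ Encodable.encode '' _).Finite
  rw [← image_inter hinj]
  exact (floorGraph_inter_finite hrs).image _

end AlmostDisjoint

section FinitelyAdditive

variable {α : Type*} {μ : Set α → ℝ}
  (hadd : ∀ A B, Disjoint A B → μ (A ∪ B) = μ A + μ B)
include hadd

lemma le_of_subset_of_additive (hμ : ∀ A, 0 ≤ μ A) {A B : Set α} (hAB : A ⊆ B) :
    μ A ≤ μ B := by
  have := hadd A (B \ A) disjoint_sdiff_right
  rw [union_sdiff_cancel hAB] at this
  linarith [hμ (B \ A)]

lemma diff_eq_of_inter_finite_of_additive (hfin : ∀ A : Set α, A.Finite → μ A = 0)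
    {A B : Set α} (hAB : (A ∩ B).Finite) : μ (A \ B) = μ A := by
  have := hadd (A \ B) (A ∩ B) (disjoint_sdiff_left.mono_right inter_subset_right)
  rw [sdiff_union_inter, hfin _ hAB, add_zero] at this
  exact this.symm

lemma sum_eq_biUnion_of_additive (hfin : ∀ A : Set α, A.Finite → μ A = 0) {ι : Type*}
    {A : ι → Set α} (hA : Pairwise fun i j => (A i ∩ A j).Finite) (s : Finset ι) :
    ∑ i ∈ s, μ (A i) = μ (⋃ i ∈ s, A i) := by
  classical
  induction s using Finset.induction_on with
  | empty => simpa using (hfin ∅ finite_empty).symm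
  | @insert a s ha ih =>
    have hinter : (A a ∩ ⋃ i ∈ s, A i).Finite := by
      rw [inter_iUnion₂]
      exact s.finite_toSet.biUnion fun i hi => hA fun h => ha (h ▸ hi)
    rw [Finset.sum_insert ha, ih, Finset.set_biUnion_insert, ← sdiff_union_self,
      hadd _ _ disjoint_sdiff_left, diff_eq_of_inter_finite_of_additive hadd hfin hinter]

theorem exists_eq_zero_of_pairwise_inter_finite (hμ : ∀ A, 0 ≤ μ A)
    (hfin : ∀ A : Set α, A.Finite → μ A = 0) {ι : Type*} [Uncountable ι]
    {A : ι → Set α} (hA : Pairwise fun i j => (A i ∩ A j).Finite) : ∃ i, μ (A i) = 0 := by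
  have hsum : Summable fun i => μ (A i) :=
    summable_of_sum_le (fun i => hμ (A i)) fun s => by
      rw [sum_eq_biUnion_of_additive hadd hfin hA]
      exact le_of_subset_of_additive hadd hμ (subset_univ _)
  by_contra! hne
  exact not_countable_univ (hsum.countable_support.mono fun i _ => hne i)

end FinitelyAdditive

section Indicator

lemma indicatorSeq_union {A B : Set ℕ} (h : Disjoint A B) :
    indicatorSeq (A ∪ B) = indicatorSeq A + indicatorSeq B :=
  lp.ext (indicator_union_of_disjoint h _)

open ComplexOrder in
lemma indicatorSeq_nonneg (A : Set ℕ) (i : ℕ) : 0 ≤ indicatorSeq A i := by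
  by_cases h : i ∈ A <;> simp [indicatorSeq, h]

lemma tendsto_indicatorSeq_of_finite {A : Set ℕ} (hA : A.Finite) :
    Tendsto (fun i => indicatorSeq A i) atTop (𝓝 0) := by
  refine tendsto_const_nhds.congr' ?_
  filter_upwards [hA.eventually_cofinite_notMem.filter_mono Nat.cofinite_eq_atTop.ge] with i hi
  simp [indicatorSeq, hi]

end Indicator

open ComplexOrder in
/-- Every positive `ω ∈ c₀^⊥ ⊆ (ℓ_∞)'` vanishes on the
characteristic sequence of some infinite subset `M ⊆ ℕ`. -/
theorem exists_infinite_set_annihilated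
    (ω : lp (fun _ : ℕ => ℂ) ⊤ →L[ℂ] ℂ)
    (hperp : ∀ y : lp (fun _ : ℕ => ℂ) ⊤, Tendsto (fun i => y i) atTop (𝓝 (0 : ℂ)) → ω y = 0)
    (hpos : ∀ y : lp (fun _ : ℕ => ℂ) ⊤, (∀ i, 0 ≤ y i) → 0 ≤ ω y) :
    ∃ M : Set ℕ, M.Infinite ∧ ω (indicatorSeq M) = 0 := by
  have hposI : ∀ A, 0 ≤ ω (indicatorSeq A) := fun A => hpos _ (indicatorSeq_nonneg A)
  obtain ⟨A, hAinf, hAdisj⟩ := exists_uncountable_almostDisjoint_family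
  obtain ⟨r, hr⟩ := exists_eq_zero_of_pairwise_inter_finite (μ := fun A => (ω (indicatorSeq A)).re)
    (fun A B h => by simp only [indicatorSeq_union h, map_add, Complex.add_re])
    (fun A => (Complex.le_def.1 (hposI A)).1)
    (fun A hA => by simp [hperp _ (tendsto_indicatorSeq_of_finite hA)]) hAdisj
  exact ⟨A r, hAinf r, Complex.ext hr (Complex.le_def.1 (hposI (A r))).2.symm⟩

end
end
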